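/- Fix a weight matrix P ∈ ℝ_{>0}^{m×n}. There exist vectors u, w ∈ ℝ_{>0}^m with the following property: defining for each item j ∈ [n] the set S_j = { i ∈ [m] : p_{i,j}/u_i = min_{k∈[m]} p_{k,j}/u_k }, the assignment X̂ given by x̂_{i,j} = w_i / Σ_{i'∈S_j} w_{i'} if i ∈ S_j and x̂_{i,j} = 0 otherwise, is a feasible assignment satisfying max_{i∈[m]} ℓ_i(P,X̂) = ℓ^MKS(P). -/

import Mathlib

/-!
Let `z` maximize the LP dual `∑ⱼ minᵢ zᵢ pᵢⱼ` over the simplex, with value `T`, let `yⱼ` be the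
minimum for item `j` and `Sⱼ` the agents attaining it. Optimality of `z` yields Hall's condition:
the items with `Sⱼ ⊆ A` cost at most `T · z(A)`. Under Hall's condition with slack, the weights `w`
for which proportional sharing on the `Sⱼ` gives every agent `i` exactly the cost `T zᵢ` (hence
load `T`) are `w = exp t` for a minimizer `t` of the coercive potential
`∑ⱼ yⱼ log ∑_{i ∈ Sⱼ} exp tᵢ - ∑ᵢ T zᵢ tᵢ`. Tight sets are split off by induction and placed on
higher priority levels `σ`, and `uᵢ = (zᵢ (1 + δ σᵢ))⁻¹` with `δ` small makes the minimizers of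
`pᵢⱼ / uᵢ` exactly the lowest-level agents of `Sⱼ`. Weak duality shows that `T` is the optimal
makespan.
-/

open Finset

/-- A feasible (fractional) assignment: entries in `[0,1]`, each item fully allocated. -/
def Feasible {m n : ℕ} (X : Fin m → Fin n → ℝ) : Prop :=
  (∀ i j, 0 ≤ X i j ∧ X i j ≤ 1) ∧ ∀ j, ∑ i, X i j = 1

/-- Load of agent `i` under the assignment `X`. -/
noncomputable def loadX {m n : ℕ} (P X : Fin m → Fin n → ℝ) (i : Fin m) : ℝ :=
  ∑ j, X i j * P i j

/-- Optimal makespan (MinMax objective). -/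
noncomputable def MKS {m n : ℕ} (P : Fin m → Fin n → ℝ) : ℝ :=
  sInf { t | ∃ X, Feasible X ∧ t = ⨆ i, loadX P X i }

/-- Optimal Santa Claus value (MaxMin objective). -/
noncomputable def SNT {m n : ℕ} (P : Fin m → Fin n → ℝ) : ℝ :=
  sSup { t | ∃ X, Feasible X ∧ t = ⨅ i, loadX P X i }

open Classical in
/-- Proportional allocation on the restricted sets
`S j = {i | p_{i,j}/u_i = min_k p_{k,j}/u_k}` with weights `w`. -/
noncomputable def propX {m n : ℕ} (P : Fin m → Fin n → ℝ) (u w : Fin m → ℝ)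
    (i : Fin m) (j : Fin n) : ℝ :=
  if ∀ k, P i j / u i ≤ P k j / u k then
    w i / ∑ i' ∈ Finset.univ.filter (fun i' => ∀ k, P i' j / u i' ≤ P k j / u k), w i'
  else 0

section ArgminOn

variable {ι α β : Type*} [LinearOrder α] [LinearOrder β]

def argminOn (f : ι → α) (s : Finset ι) : Finset ι :=
  s.filter fun i => ∀ k ∈ s, f i ≤ f k

variable {f : ι → α} {s : Finset ι} {i : ι}

theorem mem_argminOn : i ∈ argminOn f s ↔ i ∈ s ∧ ∀ k ∈ s, f i ≤ f k := mem_filter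

theorem argminOn_subset : argminOn f s ⊆ s := filter_subset _ _

theorem argminOn_nonempty (hs : s.Nonempty) : (argminOn f s).Nonempty := by
  obtain ⟨i, hi, hmin⟩ := s.exists_min_image f hs
  exact ⟨i, mem_argminOn.2 ⟨hi, hmin⟩⟩

theorem argminOn_const (a : α) : argminOn (fun _ : ι => a) s = s := by
  ext; simp [argminOn]

theorem inf'_eq_of_mem_argminOn (hs : s.Nonempty) (hi : i ∈ argminOn f s) : s.inf' hs f = f i :=
  le_antisymm (inf'_le f (mem_argminOn.1 hi).1) (le_inf' hs f (mem_argminOn.1 hi).2)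

theorem inf'_lt_of_notMem_argminOn (hs : s.Nonempty) (hi : i ∈ s) (hi' : i ∉ argminOn f s) :
    s.inf' hs f < f i := by
  simp only [mem_argminOn, hi, true_and, not_forall, not_le, exists_prop] at hi'
  obtain ⟨k, hk, hki⟩ := hi'
  exact (inf'_le f hk).trans_lt hki

theorem argminOn_eq_argminOn_of_lex {g : ι → α} {f : ι → β} {T : Finset ι} (hTs : T ⊆ s)
    (hT : T.Nonempty) (hlt : ∀ i ∈ T, ∀ k ∈ s, k ∉ T → g i < g k)
    (hiff : ∀ i ∈ T, ∀ k ∈ T, g i ≤ g k ↔ f i ≤ f k) : argminOn g s = argminOn f T := by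
  ext i
  simp only [mem_argminOn]
  constructor
  · rintro ⟨his, hmin⟩
    have hiT : i ∈ T := by
      by_contra hiT
      obtain ⟨k, hk⟩ := hT
      exact (hlt k hk i his hiT).not_ge (hmin k (hTs hk))
    exact ⟨hiT, fun k hk => (hiff i hiT k hk).1 (hmin k (hTs hk))⟩
  · rintro ⟨hiT, hmin⟩
    refine ⟨hTs hiT, fun k hk => ?_⟩
    by_cases hkT : k ∈ T
    · exact (hiff i hiT k hkT).2 (hmin k hkT)
    · exact (hlt i hiT k hk hkT).le

end ArgminOn

section ProportionalShare

variable {ι κ : Type*} [DecidableEq ι]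

noncomputable def propShare (s : Finset ι) (w : ι → ℝ) (i : ι) : ℝ :=
  if i ∈ s then w i / ∑ k ∈ s, w k else 0

variable {s : Finset ι} {w w' : ι → ℝ} {i : ι}

theorem propShare_of_notMem (hi : i ∉ s) : propShare s w i = 0 := if_neg hi

theorem propShare_congr (h : ∀ k ∈ s, w k = w' k) : propShare s w i = propShare s w' i := by
  unfold propShare
  split_ifs with hi
  · rw [h i hi, sum_congr rfl h]
  · rfl

theorem propShare_nonneg (hw : ∀ k, 0 < w k) : 0 ≤ propShare s w i := by
  unfold propShare
  split_ifs
  · exact div_nonneg (hw i).le (sum_nonneg fun k _ => (hw k).le)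
  · rfl

theorem propShare_le_one (hw : ∀ k, 0 < w k) : propShare s w i ≤ 1 := by
  unfold propShare
  split_ifs with hi
  · exact div_le_one_of_le₀ (single_le_sum (fun k _ => (hw k).le) hi)
      (sum_nonneg fun k _ => (hw k).le)
  · exact zero_le_one

theorem sum_propShare {I : Finset ι} (hw : ∀ k, 0 < w k) (hs : s.Nonempty) (hsI : s ⊆ I) :
    ∑ i ∈ I, propShare s w i = 1 := by
  unfold propShare
  rw [sum_ite_mem, inter_eq_right.2 hsI, ← sum_div]
  exact div_self (sum_pos (fun k _ => hw k) hs).ne'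

noncomputable def demand (S : κ → Finset ι) (y : κ → ℝ) (J : Finset κ) (w : ι → ℝ) (i : ι) : ℝ :=
  ∑ j ∈ J, y j * propShare (S j) w i

variable {S S' : κ → Finset ι} {y : κ → ℝ} {J : Finset κ}

theorem demand_congr (h : ∀ j ∈ J, S j = S' j ∧ ∀ k ∈ S j, w k = w' k) :
    demand S y J w i = demand S' y J w' i :=
  sum_congr rfl fun j hj => by
    rw [(h j hj).1, propShare_congr fun k hk => (h j hj).2 k ((h j hj).1 ▸ hk)]

theorem demand_eq_zero (h : ∀ j ∈ J, i ∉ S j) : demand S y J w i = 0 :=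
  sum_eq_zero fun j hj => by rw [propShare_of_notMem (h j hj), mul_zero]

def confinedMass (S : κ → Finset ι) (y : κ → ℝ) (J : Finset κ) (A : Finset ι) : ℝ :=
  ∑ j ∈ J with S j ⊆ A, y j

end ProportionalShare

section Slack

variable {ι κ : Type*} [DecidableEq ι] {S : κ → Finset ι} {y : κ → ℝ} {b : ι → ℝ}
  {I : Finset ι} {J : Finset κ} {γ : ℝ}

/-- One step of a layer-cake argument: `t` is cut down to its second largest value on `I`. -/
theorem exists_truncation (hSI : ∀ j ∈ J, S j ⊆ I) (hsum : ∑ j ∈ J, y j = ∑ i ∈ I, b i)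
    (hslack : ∀ A ⊆ I, A.Nonempty → A ≠ I → confinedMass S y J A + γ ≤ ∑ i ∈ A, b i)
    (t : ι → ℝ) (M : κ → ℝ) (hM : ∀ j ∈ J, ∀ l ∈ S j, t l ≤ M j) (hI : I.Nonempty)
    (hB : (I.filter fun l => t l < I.sup' hI t).Nonempty) :
    ∃ (t' : ι → ℝ) (M' : κ → ℝ) (δ : ℝ), 0 ≤ δ ∧ (I.image t').card < (I.image t).card ∧
      (∀ j ∈ J, ∀ l ∈ S j, t' l ≤ M' j) ∧ (∀ l ∈ I, t l ≤ t' l + δ) ∧ (∀ l, t' l ≤ t l) ∧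
      (∑ j ∈ J, y j * M' j - ∑ l ∈ I, b l * t' l) + γ * δ
        ≤ ∑ j ∈ J, y j * M j - ∑ l ∈ I, b l * t l := by
  set top := I.sup' hI t
  set B := I.filter fun l => t l < top
  set second := B.sup' hB t
  have hBI : B ⊆ I := filter_subset _ _
  have hsecond : second < top := (sup'_lt_iff hB).2 fun l hl => (mem_filter.1 hl).2
  have htop : ∀ l ∈ I, l ∉ B → t l = top := fun l hl hlB =>
    le_antisymm (le_sup' t hl) (not_lt.1 fun h => hlB (mem_filter.2 ⟨hl, h⟩))
  have hle_second : ∀ l ∈ B, t l ≤ second := fun l hl => le_sup' t hl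
  obtain ⟨lmax, hlmaxI, hlmax⟩ := exists_mem_eq_sup' hI t
  have hlmaxB : lmax ∉ B := fun h => (mem_filter.1 h).2.ne hlmax.symm
  set δ := top - second
  refine ⟨fun l => min (t l) second, fun j => if S j ⊆ B then M j else M j - δ, δ,
    by linarith, ?_, ?_, ?_, fun l => min_le_left _ _, ?_⟩
  · refine (card_le_card fun v hv => ?_).trans_lt (card_erase_lt_of_mem
    (mem_image.2 ⟨lmax, hlmaxI, hlmax.symm⟩ : top ∈ I.image t))
    obtain ⟨l, hl, rfl⟩ := mem_image.1 hv
    refine mem_erase.2 ⟨((min_le_right _ _).trans_lt hsecond).ne, ?_⟩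
    rcases min_choice (t l) second with h | h <;> rw [h]
    · exact mem_image_of_mem t hl
    · obtain ⟨l', hl', he⟩ := exists_mem_eq_sup' hB t
      exact mem_image.2 ⟨l', hBI hl', he.symm⟩
  · intro j hj l hl
    dsimp only
    split_ifs with hSB
    · exact (min_le_left _ _).trans (hM j hj l hl)
    · obtain ⟨l', hl'S, hl'B⟩ := not_subset.1 hSB
      have := hM j hj l' hl'S
      rw [htop l' (hSI j hj hl'S) hl'B] at this
      linarith [min_le_right (t l) second]
  · intro l hl
    dsimp only
    by_cases hlB : l ∈ B
    · rw [min_eq_left (hle_second l hlB)]; linarith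
    · rw [htop l hl hlB, min_eq_right hsecond.le]; linarith
  · have hMsum : ∑ j ∈ J, y j * (if S j ⊆ B then M j else M j - δ)
        = ∑ j ∈ J, y j * M j - δ * (∑ j ∈ J, y j - confinedMass S y J B) := by
      rw [confinedMass, ← sum_filter_add_sum_filter_not J (fun j => S j ⊆ B) y, add_sub_cancel_left,
        mul_sum, sum_filter, ← sum_sub_distrib]
      refine sum_congr rfl fun j _ => ?_
      split_ifs <;> ring
    have htsum : ∑ l ∈ I, b l * min (t l) second = ∑ l ∈ I, b l * t l - δ * ∑ l ∈ I \ B, b l := by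
      rw [← sum_sdiff hBI, ← sum_sdiff hBI (f := fun l => b l * t l), mul_sum]
      have h1 : ∀ l ∈ I \ B, b l * min (t l) second = b l * t l - δ * b l := fun l hl => by
        rw [mem_sdiff] at hl
        rw [htop l hl.1 hl.2, min_eq_right hsecond.le]; ring
      have h2 : ∀ l ∈ B, b l * min (t l) second = b l * t l := fun l hl => by
        rw [min_eq_left (hle_second l hl)]
      rw [sum_congr rfl h1, sum_congr rfl h2, sum_sub_distrib]; ring
    have hgap := hslack B hBI hB (fun h => hlmaxB (h ▸ hlmaxI))
    have hsplit := sum_sdiff hBI (f := b)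
    have hδ : 0 ≤ δ := by linarith
    rw [hMsum, htsum]
    nlinarith [mul_le_mul_of_nonneg_left hgap hδ]

theorem mul_sub_le_of_slack (hS : ∀ j ∈ J, (S j).Nonempty) (hSI : ∀ j ∈ J, S j ⊆ I)
    (hy : ∀ j ∈ J, 0 ≤ y j) (hsum : ∑ j ∈ J, y j = ∑ i ∈ I, b i) (hγ : 0 ≤ γ)
    (hslack : ∀ A ⊆ I, A.Nonempty → A ≠ I → confinedMass S y J A + γ ≤ ∑ i ∈ A, b i)
    (t : ι → ℝ) (M : κ → ℝ) (hM : ∀ j ∈ J, ∀ l ∈ S j, t l ≤ M j) {i k : ι} (hi : i ∈ I)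
    (hk : k ∈ I) : γ * (t i - t k) ≤ ∑ j ∈ J, y j * M j - ∑ l ∈ I, b l * t l := by
  have hI : I.Nonempty := ⟨i, hi⟩
  induction h : (I.image t).card using Nat.strong_induction_on generalizing t M with
  | _ N ih =>
  by_cases hB : (I.filter fun l => t l < I.sup' hI t).Nonempty
  · obtain ⟨t', M', δ, hδ, hcard, hM', hcut, hlow, hgain⟩ :=
      exists_truncation hSI hsum hslack t M hM hI hB
    have := ih _ (h ▸ hcard) t' M' hM' rfl
    nlinarith [hcut i hi, hlow k]
  · have hconst : ∀ l ∈ I, t l = I.sup' hI t := fun l hl =>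
      le_antisymm (le_sup' t hl) (not_lt.1 fun hlt => hB ⟨l, mem_filter.2 ⟨hl, hlt⟩⟩)
    have hMtop : ∀ j ∈ J, I.sup' hI t ≤ M j := fun j hj => by
      obtain ⟨l, hl⟩ := hS j hj
      exact hconst l (hSI j hj hl) ▸ hM j hj l hl
    have : ∑ l ∈ I, b l * t l = ∑ j ∈ J, y j * I.sup' hI t := by
      rw [← sum_mul, hsum, sum_mul]; exact sum_congr rfl fun l hl => by rw [hconst l hl]
    rw [hconst i hi, hconst k hk, sub_self, mul_zero, this, ← sum_sub_distrib]
    exact sum_nonneg fun j hj => by nlinarith [hy j hj, hMtop j hj]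

end Slack

section Potential

open Real

variable {ι κ : Type*} {S : κ → Finset ι} {y : κ → ℝ} {b : ι → ℝ}
  {I : Finset ι} {J : Finset κ} {γ : ℝ}

/-- Its stationary points `t` are the log-weights `w = exp ∘ t` at which every demand meets
its budget. -/
noncomputable def potential (S : κ → Finset ι) (y : κ → ℝ) (b : ι → ℝ) (I : Finset ι)
    (J : Finset κ) (t : ι → ℝ) : ℝ :=
  ∑ j ∈ J, y j * log (∑ k ∈ S j, exp (t k)) - ∑ i ∈ I, b i * t i

theorem continuous_potential (hS : ∀ j ∈ J, (S j).Nonempty) :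
    Continuous (potential S y b I J) := by
  refine .sub (continuous_finsetSum _ fun j hj => continuous_const.mul (.log ?_ fun t => ?_))
    (continuous_finsetSum _ fun i _ => continuous_const.mul (continuous_apply i))
  · exact continuous_finsetSum _ fun k _ => (continuous_apply k).rexp
  · exact (sum_pos (fun k _ => exp_pos _) (hS j hj)).ne'

theorem potential_eq_of_sub_const (hS : ∀ j ∈ J, (S j).Nonempty) (hSI : ∀ j ∈ J, S j ⊆ I)
    (hsum : ∑ j ∈ J, y j = ∑ i ∈ I, b i) {t t' : ι → ℝ} {c : ℝ}
    (h : ∀ i ∈ I, t' i = t i - c) : potential S y b I J t' = potential S y b I J t := by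
  have hlog : ∀ j ∈ J, log (∑ k ∈ S j, exp (t' k)) = log (∑ k ∈ S j, exp (t k)) - c := by
    intro j hj
    rw [sum_congr rfl fun k hk => by rw [h k (hSI j hj hk), exp_sub], ← sum_div,
      log_div (sum_pos (fun k _ => exp_pos _) (hS j hj)).ne' (exp_pos c).ne', log_exp]
  have hlin : ∑ i ∈ I, b i * t' i = ∑ i ∈ I, b i * t i - c * ∑ i ∈ I, b i := by
    rw [mul_sum, ← sum_sub_distrib]
    exact sum_congr rfl fun i hi => by rw [h i hi]; ring
  unfold potential
  rw [sum_congr rfl fun j hj => by rw [hlog j hj], hlin, ← hsum]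
  simp only [mul_sub, sum_sub_distrib, ← sum_mul]
  ring

variable [DecidableEq ι]

theorem mul_sub_le_potential (hS : ∀ j ∈ J, (S j).Nonempty) (hSI : ∀ j ∈ J, S j ⊆ I)
    (hy : ∀ j ∈ J, 0 ≤ y j) (hsum : ∑ j ∈ J, y j = ∑ i ∈ I, b i) (hγ : 0 ≤ γ)
    (hslack : ∀ A ⊆ I, A.Nonempty → A ≠ I → confinedMass S y J A + γ ≤ ∑ i ∈ A, b i)
    (t : ι → ℝ) {i k : ι} (hi : i ∈ I) (hk : k ∈ I) :
    γ * (t i - t k) ≤ potential S y b I J t :=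
  mul_sub_le_of_slack hS hSI hy hsum hγ hslack t _
    (fun j hj _ hl => (le_log_iff_exp_le (sum_pos (fun _ _ => exp_pos _) (hS j hj))).2
      (single_le_sum (fun k _ => (exp_pos (t k)).le) hl)) hi hk

theorem exists_forall_potential_le (hS : ∀ j ∈ J, (S j).Nonempty) (hSI : ∀ j ∈ J, S j ⊆ I)
    (hy : ∀ j ∈ J, 0 ≤ y j) (hsum : ∑ j ∈ J, y j = ∑ i ∈ I, b i) (hγ : 0 < γ)
    (hslack : ∀ A ⊆ I, A.Nonempty → A ≠ I → confinedMass S y J A + γ ≤ ∑ i ∈ A, b i)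
    {i₀ : ι} (hi₀ : i₀ ∈ I) :
    ∃ t₀ : ι → ℝ, ∀ t, potential S y b I J t₀ ≤ potential S y b I J t := by
  set Φ := potential S y b I J
  set R := |Φ 0| / γ
  set K : Set (ι → ℝ) := Set.univ.pi fun _ => Set.Icc (-R) R
  have h0K : (0 : ι → ℝ) ∈ K := fun _ _ => ⟨by simp [R]; positivity, by simp [R]; positivity⟩
  obtain ⟨t₀, -, hmin⟩ := (isCompact_univ_pi fun _ => isCompact_Icc).exists_isMinOn ⟨0, h0K⟩
    (continuous_potential hS : Continuous Φ).continuousOn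
  refine ⟨t₀, fun t => ?_⟩
  set t' : ι → ℝ := fun i => if i ∈ I then t i - t i₀ else 0
  have ht' : Φ t' = Φ t :=
    potential_eq_of_sub_const (c := t i₀) hS hSI hsum fun i hi => by simp only [t', if_pos hi]
  have ht'i₀ : t' i₀ = 0 := by simp [t', hi₀]
  rw [← ht']
  by_cases hle : Φ t' ≤ Φ 0
  · refine hmin fun i _ => ?_
    by_cases hi : i ∈ I
    · have h1 := mul_sub_le_potential hS hSI hy hsum hγ.le hslack t' hi hi₀
      have h2 := mul_sub_le_potential hS hSI hy hsum hγ.le hslack t' hi₀ hi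
      rw [ht'i₀] at h1 h2
      have hR : γ * |t' i| ≤ γ * R := by
        rw [mul_div_cancel₀ _ hγ.ne']
        rcases abs_cases (t' i) with ⟨h, -⟩ | ⟨h, -⟩ <;> rw [h] <;>
          linarith [le_abs_self (Φ 0)]
      exact abs_le.1 (le_of_mul_le_mul_left hR hγ)
    · simpa [t', hi] using h0K i trivial
  · exact (hmin h0K).trans (not_le.1 hle).le

theorem demand_exp_eq_of_forall_potential_le (hS : ∀ j ∈ J, (S j).Nonempty) {t₀ : ι → ℝ}
    (hmin : ∀ t, potential S y b I J t₀ ≤ potential S y b I J t) {i : ι} (hi : i ∈ I) :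
    demand S y J (fun k => exp (t₀ k)) i = b i := by
  set e : ι → ℝ := fun k => if k = i then 1 else 0
  set g : ℝ → ℝ := fun s => potential S y b I J fun k => t₀ k + s * e k
  have hW : ∀ j ∈ J, 0 < ∑ k ∈ S j, exp (t₀ k) := fun j hj =>
    sum_pos (fun _ _ => exp_pos _) (hS j hj)
  have hg : HasDerivAt g (∑ j ∈ J, y j * ((if i ∈ S j then exp (t₀ i) else 0) /
      ∑ k ∈ S j, exp (t₀ k)) - b i) 0 := by
    have hlin : ∑ k ∈ I, b k * e k = b i := by simp [e, hi]
    rw [← hlin]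
    refine .sub (.fun_sum fun j hj => .const_mul _ ?_) (.fun_sum fun k _ => .const_mul _ ?_)
    · have hsum : HasDerivAt (fun s => ∑ k ∈ S j, exp (t₀ k + s * e k))
          (if i ∈ S j then exp (t₀ i) else 0) 0 := by
        rw [show (if i ∈ S j then exp (t₀ i) else 0) = ∑ k ∈ S j, exp (t₀ k) * e k by simp [e]]
        refine .fun_sum fun k _ => ?_
        simpa using ((hasDerivAt_mul_const (x := 0) (e k)).const_add (t₀ k)).exp
      simpa using hsum.log (by simpa using (hW j hj).ne')
    · simpa using (hasDerivAt_mul_const (x := 0) (e k)).const_add (t₀ k)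
  have hzero := (IsMinOn.isLocalMin (s := Set.univ) (fun s _ => by simpa [g] using hmin _)
    Filter.univ_mem).hasDerivAt_eq_zero hg
  rw [demand, ← sub_eq_zero, ← hzero]
  congr 1
  refine sum_congr rfl fun j _ => ?_
  simp only [propShare]
  split_ifs <;> simp

theorem exists_demand_eq_of_slack (hS : ∀ j ∈ J, (S j).Nonempty) (hSI : ∀ j ∈ J, S j ⊆ I)
    (hy : ∀ j ∈ J, 0 ≤ y j) (hsum : ∑ j ∈ J, y j = ∑ i ∈ I, b i) (hγ : 0 < γ)
    (hslack : ∀ A ⊆ I, A.Nonempty → A ≠ I → confinedMass S y J A + γ ≤ ∑ i ∈ A, b i) :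
    ∃ w : ι → ℝ, (∀ i, 0 < w i) ∧ ∀ i ∈ I, demand S y J w i = b i := by
  rcases I.eq_empty_or_nonempty with rfl | ⟨i₀, hi₀⟩
  · exact ⟨1, fun _ => one_pos, by simp⟩
  obtain ⟨t₀, ht₀⟩ := exists_forall_potential_le hS hSI hy hsum hγ hslack hi₀
  exact ⟨fun k => exp (t₀ k), fun k => exp_pos _,
    fun i hi => demand_exp_eq_of_forall_potential_le hS ht₀ hi⟩

end Potential

theorem exists_pos_forall_lt_of_continuousAt {α : Type*} {s : Finset α} {F : α → ℝ → ℝ}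
    {c : α → ℝ} (hF : ∀ a ∈ s, ContinuousAt (F a) 0) (h : ∀ a ∈ s, F a 0 < c a) :
    ∃ ε > 0, ∀ a ∈ s, F a ε < c a := by
  have : ∀ᶠ ε in nhds 0, ∀ a ∈ s, F a ε < c a := s.eventually_all.2 fun a ha =>
    (hF a ha).eventually_lt continuousAt_const (h a ha)
  obtain ⟨ε, hε, hε0⟩ := ((this.filter_mono nhdsWithin_le_nhds).and self_mem_nhdsWithin).exists
    (f := nhdsWithin 0 (Set.Ioi 0))
  exact ⟨ε, hε0, hε⟩

section Levels

variable {ι κ : Type*} [DecidableEq ι] {S : κ → Finset ι} {y : κ → ℝ} {b : ι → ℝ}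
  {I A : Finset ι} {J : Finset κ}

/-- Glues solutions on a tight set `A` and on its complement: agents of `A` are put on strictly
higher levels, so they only receive items that nobody outside `A` accepts. -/
theorem exists_levels_demand_eq_of_split (hS : ∀ j ∈ J, (S j).Nonempty) (hSI : ∀ j ∈ J, S j ⊆ I)
    (h₁ : ∃ (σ : ι → ℕ) (w : ι → ℝ), (∀ i, 0 < w i) ∧
      ∀ i ∈ A, demand (fun j => argminOn σ (S j)) y (J.filter (S · ⊆ A)) w i = b i)
    (h₂ : ∃ (σ : ι → ℕ) (w : ι → ℝ), (∀ i, 0 < w i) ∧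
      ∀ i ∈ I \ A, demand (fun j => argminOn σ (S j \ A)) y (J.filter (¬ S · ⊆ A)) w i = b i) :
    ∃ (σ : ι → ℕ) (w : ι → ℝ), (∀ i, 0 < w i) ∧
      ∀ i ∈ I, demand (fun j => argminOn σ (S j)) y J w i = b i := by
  obtain ⟨σ₁, w₁, hw₁, hd₁⟩ := h₁
  obtain ⟨σ₂, w₂, hw₂, hd₂⟩ := h₂
  set N := (I \ A).sup σ₂
  set σ := A.piecewise (fun i => σ₁ i + N + 1) σ₂
  have hin : ∀ j ∈ J, S j ⊆ A → argminOn σ (S j) = argminOn σ₁ (S j) := fun j hj hSA =>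
    argminOn_eq_argminOn_of_lex subset_rfl (hS j hj) (fun _ _ _ _ hk => absurd ‹_› hk)
      fun i hi k hk => by simp only [σ, piecewise_eq_of_mem _ _ _ (hSA hi),
        piecewise_eq_of_mem _ _ _ (hSA hk)]; omega
  have hout : ∀ j ∈ J, ¬ S j ⊆ A → argminOn σ (S j) = argminOn σ₂ (S j \ A) := by
    intro j hj hSA
    refine argminOn_eq_argminOn_of_lex sdiff_subset (sdiff_nonempty.2 hSA) (fun i hi k hk hkT => ?_)
      fun i hi k hk => ?_
    · have hkA : k ∈ A := by simpa [hk] using hkT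
      have hiN : σ₂ i ≤ N := le_sup (sdiff_subset_sdiff (hSI j hj) subset_rfl hi)
      simp only [σ, piecewise_eq_of_mem _ _ _ hkA, piecewise_eq_of_notMem _ _ _ (mem_sdiff.1 hi).2]
      omega
    · simp only [σ, piecewise_eq_of_notMem _ _ _ (mem_sdiff.1 hi).2,
        piecewise_eq_of_notMem _ _ _ (mem_sdiff.1 hk).2]
  refine ⟨σ, A.piecewise w₁ w₂, fun i => ?_, fun i hi => ?_⟩
  · by_cases hiA : i ∈ A <;> simp [hiA, hw₁, hw₂]
  rw [demand, ← sum_filter_add_sum_filter_not J (S · ⊆ A), ← demand, ← demand]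
  by_cases hiA : i ∈ A
  · have hzero : demand (fun j => argminOn σ (S j)) y (J.filter (¬ S · ⊆ A))
        (A.piecewise w₁ w₂) i = 0 := demand_eq_zero fun j hj => by
      obtain ⟨hj, hSA⟩ := mem_filter.1 hj
      rw [hout j hj hSA]
      exact fun h => (mem_sdiff.1 (argminOn_subset h)).2 hiA
    rw [hzero, add_zero, ← hd₁ i hiA]
    refine demand_congr fun j hj => ?_
    obtain ⟨hj, hSA⟩ := mem_filter.1 hj
    exact ⟨hin j hj hSA, fun k hk => piecewise_eq_of_mem _ _ _ (hSA (argminOn_subset hk))⟩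
  · have hzero : demand (fun j => argminOn σ (S j)) y (J.filter (S · ⊆ A))
        (A.piecewise w₁ w₂) i = 0 := demand_eq_zero fun j hj => by
      obtain ⟨hj, hSA⟩ := mem_filter.1 hj
      rw [hin j hj hSA]
      exact fun h => hiA (hSA (argminOn_subset h))
    rw [hzero, zero_add, ← hd₂ i (mem_sdiff.2 ⟨hi, hiA⟩)]
    refine demand_congr fun j hj => ?_
    obtain ⟨hj, hSA⟩ := mem_filter.1 hj
    refine ⟨hout j hj hSA, fun k hk => piecewise_eq_of_notMem _ _ _ ?_⟩
    rw [hout j hj hSA] at hk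
    exact (mem_sdiff.1 (argminOn_subset hk)).2

theorem confinedMass_filter_of_subset {B : Finset ι} (hBA : B ⊆ A) :
    confinedMass S y (J.filter (S · ⊆ A)) B = confinedMass S y J B := by
  unfold confinedMass
  rw [filter_filter]
  exact sum_congr (filter_congr fun j _ => and_iff_right_of_imp fun h => h.trans hBA) fun _ _ => rfl

theorem confinedMass_union (B : Finset ι) :
    confinedMass S y J (A ∪ B) =
      confinedMass S y J A + confinedMass (fun j => S j \ A) y (J.filter (¬ S · ⊆ A)) B := by
  unfold confinedMass
  rw [← sum_filter_add_sum_filter_not _ (S · ⊆ A), filter_filter, filter_filter, filter_filter]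
  congr 2
  · exact filter_congr fun j _ => and_iff_right_of_imp fun h => h.trans subset_union_left
  · exact filter_congr fun j _ => by
      rw [and_comm]; exact and_congr_right fun _ => sdiff_le_iff.symm

theorem exists_levels_demand_eq (hS : ∀ j ∈ J, (S j).Nonempty) (hSI : ∀ j ∈ J, S j ⊆ I)
    (hy : ∀ j ∈ J, 0 ≤ y j) (hsum : ∑ j ∈ J, y j = ∑ i ∈ I, b i)
    (hall : ∀ A ⊆ I, confinedMass S y J A ≤ ∑ i ∈ A, b i) :
    ∃ (σ : ι → ℕ) (w : ι → ℝ), (∀ i, 0 < w i) ∧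
      ∀ i ∈ I, demand (fun j => argminOn σ (S j)) y J w i = b i := by
  induction h : I.card using Nat.strong_induction_on generalizing I J S with
  | _ n ih =>
  by_cases htight : ∃ A ⊆ I, A.Nonempty ∧ A ≠ I ∧ ∑ i ∈ A, b i ≤ confinedMass S y J A
  · obtain ⟨A, hAI, hA, hAI', htA⟩ := htight
    have htight : confinedMass S y J A = ∑ i ∈ A, b i := le_antisymm (hall A hAI) htA
    have hcard₁ : A.card < n := h ▸ card_lt_card (ssubset_of_subset_of_ne hAI hAI')
    have hcard₂ : (I \ A).card < n := by
      rw [card_sdiff_of_subset hAI, ← h]; have := hA.card_pos; have := card_le_card hAI; omega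
    have h₁ := ih _ hcard₁ (J := J.filter (S · ⊆ A)) (fun j hj => hS j (mem_filter.1 hj).1)
      (fun j hj => (mem_filter.1 hj).2) (fun j hj => hy j (mem_filter.1 hj).1) htight
      (fun B hBA => (confinedMass_filter_of_subset hBA).trans_le (hall B (hBA.trans hAI))) rfl
    have hsum₂ : ∑ j ∈ J with ¬ S j ⊆ A, y j = ∑ i ∈ I \ A, b i := by
      have := sum_filter_add_sum_filter_not J (S · ⊆ A) y
      have := sum_sdiff hAI (f := b)
      rw [confinedMass] at htight
      linarith
    have hall₂ : ∀ B ⊆ I \ A,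
        confinedMass (fun j => S j \ A) y (J.filter (¬ S · ⊆ A)) B ≤ ∑ i ∈ B, b i := by
      intro B hB
      have := hall (A ∪ B) (union_subset hAI (hB.trans sdiff_subset))
      rw [confinedMass_union, sum_union (disjoint_of_subset_right hB disjoint_sdiff)] at this
      linarith
    have h₂ := ih _ hcard₂ (fun j hj => sdiff_nonempty.2 (mem_filter.1 hj).2)
      (fun j hj => sdiff_subset_sdiff (hSI j (mem_filter.1 hj).1) subset_rfl)
      (fun j hj => hy j (mem_filter.1 hj).1) hsum₂ hall₂ rfl
    exact exists_levels_demand_eq_of_split hS hSI h₁ h₂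
  · push Not at htight
    obtain ⟨γ, hγ, hslack⟩ := exists_pos_forall_lt_of_continuousAt
      (s := I.powerset.filter fun A => A.Nonempty ∧ A ≠ I)
      (F := fun A ε => confinedMass S y J A + ε) (c := fun A => ∑ i ∈ A, b i)
      (fun _ _ => by fun_prop) fun A hA => by
        simp only [mem_filter, mem_powerset] at hA
        simpa using htight A hA.1 hA.2.1 hA.2.2
    obtain ⟨w, hw, hd⟩ := exists_demand_eq_of_slack hS hSI hy hsum hγ
      fun A hAI hA hAI' => (hslack A (by simp [hAI, hA, hAI'])).le
    exact ⟨fun _ => 0, w, hw, by simpa only [argminOn_const] using hd⟩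

end Levels

section Dual

variable {ι κ : Type*} [Fintype ι] [Nonempty ι] (P : ι → κ → ℝ)

noncomputable def minCost (z : ι → ℝ) (j : κ) : ℝ :=
  univ.inf' univ_nonempty fun i => z i * P i j

noncomputable def cheapest (z : ι → ℝ) (j : κ) : Finset ι :=
  argminOn (fun i => z i * P i j) univ

variable {P} {z : ι → ℝ}

theorem minCost_le (i : ι) (j : κ) : minCost P z j ≤ z i * P i j :=
  inf'_le _ (mem_univ i)

theorem minCost_pos (hP : ∀ i j, 0 < P i j) (hz : ∀ i, 0 < z i) (j : κ) : 0 < minCost P z j :=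
  (lt_inf'_iff _).2 fun i _ => mul_pos (hz i) (hP i j)

theorem cheapest_nonempty (j : κ) : (cheapest P z j).Nonempty :=
  argminOn_nonempty univ_nonempty

theorem mul_eq_minCost_of_mem_cheapest {i : ι} {j : κ} (hi : i ∈ cheapest P z j) :
    z i * P i j = minCost P z j :=
  (inf'_eq_of_mem_argminOn univ_nonempty hi).symm

theorem minCost_lt_of_notMem_cheapest {i : ι} {j : κ} (hi : i ∉ cheapest P z j) :
    minCost P z j < z i * P i j :=
  inf'_lt_of_notMem_argminOn univ_nonempty (mem_univ i) hi

theorem minCost_add_le_minCost_piecewise [DecidableEq ι] (hP : ∀ i j, 0 < P i j)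
    (hz : ∀ i, 0 ≤ z i) {ε : ℝ} (hε : 0 ≤ ε)
    (hgap : ∀ i j, i ∉ cheapest P z j → (1 + ε) * minCost P z j < z i * P i j)
    (A : Finset ι) (j : κ) :
    minCost P z j + ε * (if cheapest P z j ⊆ A then minCost P z j else 0)
      ≤ minCost P (A.piecewise ((1 + ε) • z) z) j := by
  refine le_inf' _ _ fun i _ => ?_
  have hm : 0 ≤ minCost P z j := le_inf' _ _ fun i _ => mul_nonneg (hz i) (hP i j).le
  have hle := minCost_le (P := P) (z := z) i j
  by_cases hiA : i ∈ A
  · rw [piecewise_eq_of_mem _ _ _ hiA, Pi.smul_apply, smul_eq_mul]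
    split_ifs <;> nlinarith
  · rw [piecewise_eq_of_notMem _ _ _ hiA]
    split_ifs with hSA
    · linarith [hgap i j fun h => hiA (hSA h)]
    · linarith

variable (P) [Fintype κ]

noncomputable def dualValue (z : ι → ℝ) : ℝ :=
  ∑ j, minCost P z j

variable {P}

theorem continuous_dualValue : Continuous (dualValue P) :=
  continuous_finsetSum _ fun _ _ =>
    Continuous.finset_inf'_apply _ fun i _ => (continuous_apply i).mul continuous_const

theorem dualValue_smul {c : ℝ} (hc : 0 ≤ c) (z : ι → ℝ) :
    dualValue P (c • z) = c * dualValue P z := by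
  simp only [dualValue, minCost, mul_sum]
  refine sum_congr rfl fun j _ => ?_
  rw [apply_inf'_eq_inf'_comp _ (c * ·) fun a b => mul_min_of_nonneg a b hc]
  simp [mul_assoc]

theorem exists_isMaxOn_dualValue (P : ι → κ → ℝ) :
    ∃ z ∈ stdSimplex ℝ ι, IsMaxOn (dualValue P) (stdSimplex ℝ ι) z :=
  (isCompact_stdSimplex ℝ ι).exists_isMaxOn
    ⟨_, by classical exact ite_eq_mem_stdSimplex ℝ (Classical.arbitrary ι)⟩
    continuous_dualValue.continuousOn

theorem dualValue_le_of_isMaxOn (hmax : IsMaxOn (dualValue P) (stdSimplex ℝ ι) z) {z' : ι → ℝ}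
    (hz' : ∀ i, 0 ≤ z' i) (hpos : 0 < ∑ i, z' i) :
    dualValue P z' ≤ dualValue P z * ∑ i, z' i := by
  set c := ∑ i, z' i
  have hmem : c⁻¹ • z' ∈ stdSimplex ℝ ι :=
    ⟨fun i => by simpa using mul_nonneg (inv_nonneg.2 hpos.le) (hz' i),
      by simp [← mul_sum, inv_mul_cancel₀ hpos.ne', c]⟩
  have := hmax hmem
  rw [Set.mem_ofPred_eq, dualValue_smul (inv_nonneg.2 hpos.le)] at this
  rw [mul_comm]
  exact (inv_mul_le_iff₀ hpos).1 this

theorem pos_of_isMaxOn_dualValue (hP : ∀ i j, 0 < P i j) [Nonempty κ] (hz : z ∈ stdSimplex ℝ ι)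
    (hmax : IsMaxOn (dualValue P) (stdSimplex ℝ ι) z) (i : ι) : 0 < z i := by
  have h1 : 0 < dualValue P fun _ => 1 :=
    sum_pos (fun j _ => minCost_pos hP (fun _ => one_pos) j) univ_nonempty
  have hcard : (0 : ℝ) < ∑ _ : ι, (1 : ℝ) := by simp [Fintype.card_pos]
  have hT : 0 < dualValue P z := by
    have := dualValue_le_of_isMaxOn hmax (fun _ => zero_le_one) hcard
    nlinarith
  refine (hz.1 i).lt_of_ne fun h => hT.not_ge (sum_nonpos fun j _ => ?_)
  simpa [← h] using minCost_le (P := P) (z := z) i j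

theorem exists_pos_forall_minCost_lt (a : ℝ) :
    ∃ ε > 0, ∀ i j, i ∉ cheapest P z j → (1 + ε * a) * minCost P z j < z i * P i j := by
  classical
  obtain ⟨ε, hε, hgap⟩ := exists_pos_forall_lt_of_continuousAt
    (s := univ.filter fun p : ι × κ => p.1 ∉ cheapest P z p.2)
    (F := fun p ε => (1 + ε * a) * minCost P z p.2) (c := fun p => z p.1 * P p.1 p.2)
    (fun _ _ => by fun_prop)
    fun p hp => by simpa using minCost_lt_of_notMem_cheapest (mem_filter.1 hp).2
  exact ⟨ε, hε, fun i j hi => hgap (i, j) (mem_filter.2 ⟨mem_univ _, hi⟩)⟩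

/-- Hall's condition at a dual optimum: scaling `z` up by a factor `1 + ε` on `A` raises the
dual value by at least `ε` times the cost of the items that only `A` serves cheapest. -/
theorem confinedMass_le_of_isMaxOn [DecidableEq ι] (hP : ∀ i j, 0 < P i j)
    (hz : z ∈ stdSimplex ℝ ι) (hmax : IsMaxOn (dualValue P) (stdSimplex ℝ ι) z) (A : Finset ι) :
    confinedMass (cheapest P z) (minCost P z) univ A ≤ ∑ i ∈ A, dualValue P z * z i := by
  obtain ⟨ε, hε, hgap⟩ := exists_pos_forall_minCost_lt (P := P) (z := z) 1
  simp only [mul_one] at hgap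
  set z' := A.piecewise ((1 + ε) • z) z
  have hz' : ∀ i, 0 ≤ z' i := fun i => by
    by_cases hi : i ∈ A
    · simpa [z', hi] using mul_nonneg (by linarith) (hz.1 i)
    · simpa [z', hi] using hz.1 i
  have hsum : ∑ i, z' i = 1 + ε * ∑ i ∈ A, z i := by
    have := sum_sdiff (subset_univ A) (f := z)
    rw [sum_piecewise, univ_inter]
    simp only [Pi.smul_apply, smul_eq_mul, ← mul_sum]
    linarith [hz.2]
  have hsum_pos : 0 < ∑ i, z' i := by
    rw [hsum]; nlinarith [sum_nonneg fun i (_ : i ∈ A) => hz.1 i]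
  have key : dualValue P z + ε * confinedMass (cheapest P z) (minCost P z) univ A
      ≤ dualValue P z * (1 + ε * ∑ i ∈ A, z i) := by
    refine le_trans ?_ ((dualValue_le_of_isMaxOn hmax hz' hsum_pos).trans_eq (by rw [hsum]))
    rw [confinedMass, sum_filter, mul_sum, dualValue, ← sum_add_distrib]
    exact sum_le_sum fun j _ => minCost_add_le_minCost_piecewise hP hz.1 hε.le hgap A j
  rw [← mul_sum]
  nlinarith

theorem exists_scaling_argminOn_eq (hP : ∀ i j, 0 < P i j) (hz : ∀ i, 0 < z i) (σ : ι → ℕ) :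
    ∃ u : ι → ℝ, (∀ i, 0 < u i) ∧
      ∀ j, argminOn (fun i => P i j / u i) univ = argminOn σ (cheapest P z j) := by
  set N := univ.sup σ
  obtain ⟨δ, hδ, hgap⟩ := exists_pos_forall_minCost_lt (P := P) (z := z) N
  refine ⟨fun i => (z i * (1 + δ * σ i))⁻¹, fun i => by have := hz i; positivity, fun j => ?_⟩
  have hdiv : ∀ i, P i j / (z i * (1 + δ * σ i))⁻¹ = z i * P i j * (1 + δ * σ i) := fun i => by
    rw [div_inv_eq_mul]; ring
  simp only [hdiv]
  refine argminOn_eq_argminOn_of_lex (subset_univ _) (cheapest_nonempty j)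
    (fun i hi k _ hk => ?_) fun i hi k hk => ?_
  · have hσ : (σ i : ℝ) ≤ N := Nat.cast_le.2 (le_sup (mem_univ i))
    have hm := minCost_pos hP hz j
    have hPk := mul_pos (hz k) (hP k j)
    rw [mul_eq_minCost_of_mem_cheapest hi]
    nlinarith [hgap k j hk, mul_le_mul_of_nonneg_left hσ hδ.le,
      mul_nonneg hδ.le (Nat.cast_nonneg (σ k))]
  · rw [mul_eq_minCost_of_mem_cheapest hi, mul_eq_minCost_of_mem_cheapest hk,
      mul_le_mul_iff_right₀ (minCost_pos hP hz j), add_le_add_iff_left,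
      mul_le_mul_iff_right₀ hδ, Nat.cast_le]

end Dual

section Makespan

variable {m n : ℕ} {P : Fin m → Fin n → ℝ}

theorem feasible_propShare {R : Fin n → Finset (Fin m)} {w : Fin m → ℝ} (hw : ∀ i, 0 < w i)
    (hR : ∀ j, (R j).Nonempty) : Feasible fun i j => propShare (R j) w i :=
  ⟨fun _ _ => ⟨propShare_nonneg hw, propShare_le_one hw⟩,
    fun j => sum_propShare hw (hR j) (subset_univ _)⟩

theorem propX_eq_propShare (u w : Fin m → ℝ) :
    propX P u w = fun i j => propShare (argminOn (fun k => P k j / u k) univ) w i := by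
  ext i j
  simp only [propX, propShare, argminOn, mem_filter, mem_univ, true_and, forall_const]

theorem MKS_eq_of_forall_le {X₀ : Fin m → Fin n → ℝ} (hX₀ : Feasible X₀)
    (h : ∀ X, Feasible X → (⨆ i, loadX P X₀ i) ≤ ⨆ i, loadX P X i) :
    MKS P = ⨆ i, loadX P X₀ i :=
  IsLeast.csInf_eq ⟨⟨X₀, hX₀, rfl⟩, by rintro _ ⟨X, hX, rfl⟩; exact h X hX⟩

variable [Nonempty (Fin m)] {z : Fin m → ℝ}

theorem dualValue_le_iSup_loadX (hz : z ∈ stdSimplex ℝ (Fin m)) {X : Fin m → Fin n → ℝ}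
    (hX : Feasible X) : dualValue P z ≤ ⨆ i, loadX P X i := by
  set L := ⨆ i, loadX P X i
  have hload : ∀ i, loadX P X i ≤ L := le_ciSup (Set.finite_range _).bddAbove
  calc dualValue P z = ∑ j, ∑ i, X i j * minCost P z j := by simp [dualValue, ← sum_mul, hX.2]
    _ ≤ ∑ j, ∑ i, X i j * (z i * P i j) := sum_le_sum fun j _ => sum_le_sum fun i _ =>
        mul_le_mul_of_nonneg_left (minCost_le i j) (hX.1 i j).1
    _ = ∑ i, z i * loadX P X i := by
        rw [sum_comm]
        simp only [loadX, mul_sum]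
        exact sum_congr rfl fun _ _ => sum_congr rfl fun _ _ => by ring
    _ ≤ ∑ i, z i * L := sum_le_sum fun i _ => mul_le_mul_of_nonneg_left (hload i) (hz.1 i)
    _ = L := by rw [← sum_mul, hz.2, one_mul]

theorem loadX_propShare_eq_demand_div (hz : ∀ i, z i ≠ 0) {R : Fin n → Finset (Fin m)}
    (hR : ∀ j, R j ⊆ cheapest P z j) (w : Fin m → ℝ) (i : Fin m) :
    loadX P (fun i j => propShare (R j) w i) i = demand R (minCost P z) univ w i / z i := by
  rw [loadX, demand, sum_div]
  refine sum_congr rfl fun j _ => ?_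
  by_cases hi : i ∈ R j
  · rw [← mul_eq_minCost_of_mem_cheapest (hR j hi)]
    field_simp [hz i]
  · simp [propShare_of_notMem hi]

end Makespan

theorem stmt17 {m n : ℕ} (hm : 0 < m) (P : Fin m → Fin n → ℝ)
    (hP : ∀ i j, 0 < P i j) :
    ∃ u w : Fin m → ℝ, (∀ i, 0 < u i) ∧ (∀ i, 0 < w i) ∧
      Feasible (propX P u w) ∧ (⨆ i, loadX P (propX P u w) i) = MKS P := by
  have : Nonempty (Fin m) := ⟨⟨0, hm⟩⟩
  rcases n.eq_zero_or_pos with rfl | hn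
  · have hfeas : ∀ X : Fin m → Fin 0 → ℝ, Feasible X := fun _ =>
      ⟨fun _ j => j.elim0, fun j => j.elim0⟩
    have hzero : ∀ X : Fin m → Fin 0 → ℝ, (⨆ i, loadX P X i) = 0 := by simp [loadX]
    exact ⟨1, 1, fun _ => one_pos, fun _ => one_pos, hfeas _,
      (MKS_eq_of_forall_le (hfeas _) fun X _ => by rw [hzero, hzero]).symm⟩
  have : Nonempty (Fin n) := ⟨⟨0, hn⟩⟩
  obtain ⟨z, hz, hmax⟩ := exists_isMaxOn_dualValue P
  have hzpos := pos_of_isMaxOn_dualValue hP hz hmax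
  obtain ⟨σ, w, hw, hdemand⟩ := exists_levels_demand_eq (I := univ) (J := univ)
    (b := fun i => dualValue P z * z i) (fun j _ => cheapest_nonempty j) (fun j _ => subset_univ _)
    (fun j _ => (minCost_pos hP hzpos j).le) (by rw [← mul_sum, hz.2, mul_one]; rfl)
    fun A _ => confinedMass_le_of_isMaxOn hP hz hmax A
  obtain ⟨u, hu, hargmin⟩ := exists_scaling_argminOn_eq hP hzpos σ
  have hX : propX P u w = fun i j => propShare (argminOn σ (cheapest P z j)) w i := by
    simp only [propX_eq_propShare, hargmin]
  have hfeas : Feasible (propX P u w) :=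
    hX ▸ feasible_propShare hw fun j => argminOn_nonempty (cheapest_nonempty j)
  have hload : ∀ i, loadX P (propX P u w) i = dualValue P z := fun i => by
    rw [hX, loadX_propShare_eq_demand_div (fun i => (hzpos i).ne') (fun j => argminOn_subset),
      hdemand i (mem_univ i), mul_div_cancel_right₀ _ (hzpos i).ne']
  refine ⟨u, w, hu, hw, hfeas, (MKS_eq_of_forall_le hfeas fun X hX => ?_).symm⟩
  simpa [hload] using dualValue_le_iSup_loadX hz hX
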